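/- arXiv:1912.05830 — 5 statements merged into one kernel-verified Lean document; each statement's English description precedes it below -/
import Mathlib

section
/- Performance difference lemma: For any two policies π' and π and any initial state x₁ ∈ S, the difference of their values satisfies V^{π'}_1(x₁) − V^{π}_1(x₁) = Σ_{h=1}^{H} Σ_{x∈S} μ^{π'}_h(x) · Σ_{a∈A} Q^{π}_h(x,a) · (π'_h(a|x) − π_h(a|x)), where μ^{π'}_h is the distribution of the state at step h under policy π' started from x₁. -/
/-!
The one-step identity
`V'_h x - V_h x = ∑_a Q_h(x,a) (π'_h(a|x) - π_h(a|x))`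
`                 + ∑_a π'_h(a|x) ∑_x' P_h(x'|x,a) (V'_{h+1} - V_{h+1})(x')`
follows from `V_h = ∑_a π_h Q_h` and `Q'_h - Q_h = P_h (V'_{h+1} - V_{h+1})`. Averaging it over `μ^{π'}_h`
turns the last term into the `μ^{π'}_{h+1}`-average of `V'_{h+1} - V_{h+1}`, so these averages
telescope from `h = 1` (where `μ^{π'}_1 = δ_{x₁}`) to `h = H + 1` (where both values vanish).
-/

open Finset

variable {S A : Type*}

/-- Value function computed with `n` remaining recursion steps, at step `h`. -/
noncomputable def Vrem [Fintype S] [Fintype A] (P : ℕ → S → A → S → ℝ)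
    (r : ℕ → S → A → ℝ) (po : ℕ → S → A → ℝ) : ℕ → ℕ → S → ℝ
  | 0, _, _ => 0
  | (n+1), h, x => ∑ a, po h x a * (r h x a + ∑ x', P h x a x' * Vrem P r po n (h+1) x')

/-- Value function `V^π_h` of policy `po` in the episodic MDP with horizon `H`. -/
noncomputable def Vval [Fintype S] [Fintype A] (H : ℕ) (P : ℕ → S → A → S → ℝ)
    (r : ℕ → S → A → ℝ) (po : ℕ → S → A → ℝ) (h : ℕ) (x : S) : ℝ :=
  Vrem P r po (H + 1 - h) h x

/-- Action-value function `Q^π_h` of policy `po`. -/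
noncomputable def Qval [Fintype S] [Fintype A] (H : ℕ) (P : ℕ → S → A → S → ℝ)
    (r : ℕ → S → A → ℝ) (po : ℕ → S → A → ℝ) (h : ℕ) (x : S) (a : A) : ℝ :=
  r h x a + ∑ x', P h x a x' * Vval H P r po (h+1) x'

/-- Distribution `μ^π_h` of the state at step `h` under policy `po` started from `x₁`. -/
noncomputable def stateDist [Fintype S] [Fintype A] [DecidableEq S]
    (P : ℕ → S → A → S → ℝ) (po : ℕ → S → A → ℝ) (x₁ : S) : ℕ → S → ℝ
  | 0 => fun x => if x = x₁ then 1 else 0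
  | 1 => fun x => if x = x₁ then 1 else 0
  | (h+2) => fun x' => ∑ x, ∑ a, stateDist P po x₁ (h+1) x * po (h+1) x a * P (h+1) x a x'

section ValueFunctions

variable [Fintype S] [Fintype A] (H : ℕ) (P : ℕ → S → A → S → ℝ) (r : ℕ → S → A → ℝ)

lemma Vval_eq_sum_mul_Qval (po : ℕ → S → A → ℝ) {h : ℕ} (hh : h ≤ H) (x : S) :
    Vval H P r po h x = ∑ a, po h x a * Qval H P r po h x a := by
  rw [Vval, show H + 1 - h = H + 1 - (h + 1) + 1 by omega, Vrem]
  rfl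

lemma Vval_horizon_succ (po : ℕ → S → A → ℝ) (x : S) : Vval H P r po (H + 1) x = 0 := by
  rw [Vval, Nat.sub_self, Vrem]

lemma Qval_sub_Qval (po po' : ℕ → S → A → ℝ) (h : ℕ) (x : S) (a : A) :
    Qval H P r po' h x a - Qval H P r po h x a =
      ∑ x', P h x a x' * (Vval H P r po' (h + 1) x' - Vval H P r po (h + 1) x') := by
  simp only [Qval, mul_sub, sum_sub_distrib]
  ring

lemma Vval_sub_Vval (po po' : ℕ → S → A → ℝ) {h : ℕ} (hh : h ≤ H) (x : S) :
    Vval H P r po' h x - Vval H P r po h x =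
      ∑ a, Qval H P r po h x a * (po' h x a - po h x a) +
        ∑ a, po' h x a *
          ∑ x', P h x a x' * (Vval H P r po' (h + 1) x' - Vval H P r po (h + 1) x') := by
  simp only [Vval_eq_sum_mul_Qval H P r _ hh, ← Qval_sub_Qval, ← sum_add_distrib,
    ← sum_sub_distrib]
  exact sum_congr rfl fun a _ => by ring

end ValueFunctions

lemma sum_stateDist_succ_mul [Fintype S] [Fintype A] [DecidableEq S]
    (P : ℕ → S → A → S → ℝ) (po : ℕ → S → A → ℝ) (x₁ : S) {h : ℕ} (hh : 1 ≤ h) (f : S → ℝ) :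
    ∑ x', stateDist P po x₁ (h + 1) x' * f x' =
      ∑ x, stateDist P po x₁ h x * ∑ a, po h x a * ∑ x', P h x a x' * f x' := by
  obtain ⟨m, rfl⟩ := Nat.exists_eq_add_of_le' hh
  simp only [stateDist, sum_mul, mul_sum]
  rw [sum_comm]
  refine sum_congr rfl fun x _ => ?_
  rw [sum_comm]
  exact sum_congr rfl fun a _ => sum_congr rfl fun x' _ => by ring

theorem performance_difference_general [Fintype S] [Fintype A] [DecidableEq S]
    (H : ℕ)
    (P : ℕ → S → A → S → ℝ)
    (r : ℕ → S → A → ℝ)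
    (po po' : ℕ → S → A → ℝ)
    (x₁ : S) :
    Vval H P r po' 1 x₁ - Vval H P r po 1 x₁ =
      ∑ h ∈ Finset.Icc 1 H, ∑ x, stateDist P po' x₁ h x *
        ∑ a, Qval H P r po h x a * (po' h x a - po h x a) := by
  set D : ℕ → ℝ := fun h => ∑ x, stateDist P po' x₁ h x * (Vval H P r po' h x - Vval H P r po h x)
  have hD_one : D 1 = Vval H P r po' 1 x₁ - Vval H P r po 1 x₁ := by simp [D, stateDist]
  have hD_end : D (H + 1) = 0 := by simp [D, Vval_horizon_succ]
  have hD_step : ∀ h ∈ Icc 1 H, ∑ x, stateDist P po' x₁ h x *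
      ∑ a, Qval H P r po h x a * (po' h x a - po h x a) = D h - D (h + 1) := by
    intro h hh
    rw [mem_Icc] at hh
    simp only [D, Vval_sub_Vval H P r po po' hh.2, mul_add, sum_add_distrib,
      sum_stateDist_succ_mul P po' x₁ hh.1]
    ring
  have telescope := sum_Ico_sub (f := D) (show 1 ≤ H + 1 by omega)
  rw [sum_congr rfl hD_step, ← Ico_add_one_right_eq_Icc]
  simp only [← neg_sub (D (_ + 1)), sum_neg_distrib, telescope, hD_end, hD_one]
  ring

/-- Performance difference lemma. -/
theorem performance_difference [Fintype S] [Fintype A] [Nonempty A] [DecidableEq S]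
    (H : ℕ) (hH : 1 ≤ H)
    (P : ℕ → S → A → S → ℝ)
    (hP0 : ∀ h ∈ Finset.Icc 1 H, ∀ x a x', 0 ≤ P h x a x')
    (hP1 : ∀ h ∈ Finset.Icc 1 H, ∀ x a, ∑ x', P h x a x' = 1)
    (r : ℕ → S → A → ℝ)
    (hr : ∀ h ∈ Finset.Icc 1 H, ∀ x a, 0 ≤ r h x a ∧ r h x a ≤ 1)
    (po po' : ℕ → S → A → ℝ)
    (hpo0 : ∀ h ∈ Finset.Icc 1 H, ∀ x a, 0 ≤ po h x a)
    (hpo1 : ∀ h ∈ Finset.Icc 1 H, ∀ x, ∑ a, po h x a = 1)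
    (hpo'0 : ∀ h ∈ Finset.Icc 1 H, ∀ x a, 0 ≤ po' h x a)
    (hpo'1 : ∀ h ∈ Finset.Icc 1 H, ∀ x, ∑ a, po' h x a = 1)
    (x₁ : S) :
    Vval H P r po' 1 x₁ - Vval H P r po 1 x₁ =
      ∑ h ∈ Finset.Icc 1 H, ∑ x, stateDist P po' x₁ h x *
        ∑ a, Qval H P r po h x a * (po' h x a - po h x a) :=
  performance_difference_general H P r po po' x₁
end

section
/- One-step descent lemma for exponential-weight updates: Let A be a finite nonempty set, H > 0, α > 0, Q : A → [0,H], let p ∈ Δ(A) have full support, let p* ∈ Δ(A) be arbitrary, and define p' ∈ Δ(A) by p'(a) = p(a)·exp(α·Q(a)) / Σ_{a'} p(a')·exp(α·Q(a')). Then Σ_{a∈A} Q(a)·(p*(a) − p(a)) ≤ α·H²/2 + α^{−1}·( D_KL(p*‖p) − D_KL(p*‖p') ). -/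
/-!
The exponential-weight update is a Gibbs reweighting, so `KL(p*‖p) - KL(p*‖p')` equals
`α 𝔼_{p*}[Q] - log Z` exactly, where `Z = 𝔼_p[exp (α Q)]`. To bound `log Z`, factor out
`exp (α H)`: the remaining exponents `α (Q - H)` lie in `[-α H, 0]`, where
`exp y ≤ 1 + y + y² / 2`, and `log z ≤ z - 1` then gives `log Z ≤ α 𝔼_p[Q] + α² H² / 2`.
-/

open Finset

/-- KL divergence between distributions on a finite set (convention `0 · log 0 = 0`). -/
noncomputable def KLdiv {A : Type*} [Fintype A] (p q : A → ℝ) : ℝ :=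
  ∑ a, p a * Real.log (p a / q a)

namespace Real

lemma exp_le_quadratic_of_nonpos {y : ℝ} (hy : y ≤ 0) : exp y ≤ 1 + y + y ^ 2 / 2 := by
  have h_neg := quadratic_le_exp_of_nonneg (neg_nonneg.2 hy)
  have h_prod : exp y * exp (-y) = 1 := by rw [← exp_add, add_neg_cancel, exp_zero]
  -- `(1 + y + y²/2)(1 - y + y²/2) = 1 + y⁴/4 ≥ 1 = exp y · exp (-y)`
  nlinarith [exp_pos y, sq_nonneg y, sq_nonneg (y ^ 2), sq_nonneg (1 + y)]

end Real

open Real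

section

variable {A : Type*} [Fintype A]

lemma sum_mul_exp_pos {p x : A → ℝ} (hp0 : ∀ a, 0 ≤ p a) (hp1 : ∑ a, p a = 1) :
    0 < ∑ a, p a * exp (x a) := by
  obtain ⟨b, -, hb⟩ := exists_ne_zero_of_sum_ne_zero (hp1.trans_ne one_ne_zero)
  exact sum_pos' (fun a _ => mul_nonneg (hp0 a) (exp_pos _).le)
    ⟨b, mem_univ b, mul_pos ((hp0 b).lt_of_ne' hb) (exp_pos _)⟩

lemma KLdiv_sub_KLdiv_of_gibbs [Nonempty A] {r q q' f : A → ℝ} (hq : ∀ a, 0 < q a)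
    (hr : ∑ a, r a = 1)
    (hq' : ∀ a, q' a = q a * exp (f a) / ∑ b, q b * exp (f b)) :
    KLdiv r q - KLdiv r q' = ∑ a, r a * f a - log (∑ a, q a * exp (f a)) := by
  set Z := ∑ b, q b * exp (f b)
  have hZ : 0 < Z := sum_pos (fun a _ => mul_pos (hq a) (exp_pos _)) univ_nonempty
  have h_log_q' (a : A) : log (q' a) = log (q a) + f a - log Z := by
    rw [hq' a, log_div (mul_pos (hq a) (exp_pos _)).ne' hZ.ne',
      log_mul (hq a).ne' (exp_ne_zero _), log_exp]
  have h_term (a : A) :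
      r a * log (r a / q a) - r a * log (r a / q' a) = r a * (f a - log Z) := by
    rcases eq_or_ne (r a) 0 with h | h
    · simp [h]
    · have hq'a : q' a ≠ 0 := by
        rw [hq' a]; exact (div_pos (mul_pos (hq a) (exp_pos _)) hZ).ne'
      rw [log_div h (hq a).ne', log_div h hq'a, h_log_q']
      ring
  rw [KLdiv, KLdiv, ← sum_sub_distrib]
  simp only [h_term, mul_sub, sum_sub_distrib, ← sum_mul, hr, one_mul]

lemma log_sum_mul_exp_le_of_nonpos {p x : A → ℝ} (hp0 : ∀ a, 0 ≤ p a) (hp1 : ∑ a, p a = 1)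
    (hx : ∀ a, x a ≤ 0) :
    log (∑ a, p a * exp (x a)) ≤ ∑ a, p a * (x a + x a ^ 2 / 2) := by
  calc log (∑ a, p a * exp (x a))
      ≤ ∑ a, p a * exp (x a) - 1 := log_le_sub_one_of_pos (sum_mul_exp_pos hp0 hp1)
    _ ≤ ∑ a, p a * (1 + x a + x a ^ 2 / 2) - 1 := by
        gcongr with a
        · exact hp0 a
        · exact exp_le_quadratic_of_nonpos (hx a)
    _ = ∑ a, p a * (x a + x a ^ 2 / 2) := by
        simp only [add_assoc, mul_add, sum_add_distrib, mul_one, hp1, add_sub_cancel_left]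

lemma log_sum_mul_exp_mul_le {p Q : A → ℝ} {α H : ℝ} (hp0 : ∀ a, 0 ≤ p a)
    (hp1 : ∑ a, p a = 1) (hα : 0 ≤ α) (hQ0 : ∀ a, 0 ≤ Q a) (hQH : ∀ a, Q a ≤ H) :
    log (∑ a, p a * exp (α * Q a)) ≤ α * ∑ a, p a * Q a + α ^ 2 * H ^ 2 / 2 := by
  have h_shift :
      ∑ a, p a * exp (α * Q a) = exp (α * H) * ∑ a, p a * exp (α * (Q a - H)) := by
    rw [mul_sum]
    refine sum_congr rfl fun a _ => ?_
    rw [mul_left_comm, ← exp_add]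
    ring_nf
  have h_sq (a : A) : (α * (Q a - H)) ^ 2 ≤ α ^ 2 * H ^ 2 := by
    rw [mul_pow]
    exact mul_le_mul_of_nonneg_left (by nlinarith [hQ0 a, hQH a]) (sq_nonneg α)
  have h_nonpos (a : A) : α * (Q a - H) ≤ 0 :=
    mul_nonpos_of_nonneg_of_nonpos hα (sub_nonpos.2 (hQH a))
  have h_bound := log_sum_mul_exp_le_of_nonpos hp0 hp1 h_nonpos
  rw [h_shift, log_mul (exp_ne_zero _) (sum_mul_exp_pos hp0 hp1).ne', log_exp]
  calc α * H + log (∑ a, p a * exp (α * (Q a - H)))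
      ≤ α * H + ∑ a, p a * (α * (Q a - H) + (α * (Q a - H)) ^ 2 / 2) := by gcongr
    _ ≤ α * H + ∑ a, p a * (α * (Q a - H) + α ^ 2 * H ^ 2 / 2) := by
        gcongr with a
        · exact hp0 a
        · exact h_sq a
    _ = α * ∑ a, p a * Q a + α ^ 2 * H ^ 2 / 2 := by
        simp only [mul_add, mul_sub, sum_add_distrib, sum_sub_distrib, ← sum_mul, hp1,
          mul_left_comm (p _) α, ← mul_sum]
        ring

end

theorem one_step_descent_general {A : Type*} [Fintype A] [Nonempty A]
    (H α : ℝ) (hα : 0 < α)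
    (Q : A → ℝ) (hQ0 : ∀ a, 0 ≤ Q a) (hQH : ∀ a, Q a ≤ H)
    (p : A → ℝ) (hp0 : ∀ a, 0 < p a) (hp1 : ∑ a, p a = 1)
    (pstar : A → ℝ) (hps1 : ∑ a, pstar a = 1)
    (p' : A → ℝ)
    (hp' : ∀ a, p' a = p a * Real.exp (α * Q a) / ∑ a', p a' * Real.exp (α * Q a')) :
    ∑ a, Q a * (pstar a - p a) ≤
      α * H ^ 2 / 2 + α⁻¹ * (KLdiv pstar p - KLdiv pstar p') := by
  rw [KLdiv_sub_KLdiv_of_gibbs hp0 hps1 hp']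
  have h_log := log_sum_mul_exp_mul_le (fun a => (hp0 a).le) hp1 hα.le hQ0 hQH
  have h_gain : ∑ a, pstar a * (α * Q a) - α * ∑ a, p a * Q a =
      α * ∑ a, Q a * (pstar a - p a) := by
    rw [mul_sum, mul_sum, ← sum_sub_distrib]
    exact sum_congr rfl fun a _ => by ring
  calc ∑ a, Q a * (pstar a - p a)
      = α * H ^ 2 / 2 + α⁻¹ * (α * (∑ a, Q a * (pstar a - p a) - α * H ^ 2 / 2)) := by
        field_simp
        ring
    _ ≤ α * H ^ 2 / 2 +
          α⁻¹ * (∑ a, pstar a * (α * Q a) - log (∑ a, p a * exp (α * Q a))) := by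
        gcongr
        linarith

/-- One-step descent lemma for exponential-weight updates. -/
theorem one_step_descent {A : Type*} [Fintype A] [Nonempty A]
    (H α : ℝ) (hH : 0 < H) (hα : 0 < α)
    (Q : A → ℝ) (hQ0 : ∀ a, 0 ≤ Q a) (hQH : ∀ a, Q a ≤ H)
    (p : A → ℝ) (hp0 : ∀ a, 0 < p a) (hp1 : ∑ a, p a = 1)
    (pstar : A → ℝ) (hps0 : ∀ a, 0 ≤ pstar a) (hps1 : ∑ a, pstar a = 1)
    (p' : A → ℝ)
    (hp' : ∀ a, p' a = p a * Real.exp (α * Q a) / ∑ a', p a' * Real.exp (α * Q a')) :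
    ∑ a, Q a * (pstar a - p a) ≤
      α * H ^ 2 / 2 + α⁻¹ * (KLdiv pstar p - KLdiv pstar p') :=
  one_step_descent_general H α hα Q hQ0 hQH p hp0 hp1 pstar hps1 p' hp'
end

section
/- Instantiated mirror-descent regret bound with uniform initialization: Let A be a finite set with |A| ≥ 2, H > 0, K ≥ 1, let p¹ be the uniform distribution on A, let Q^k : A → [0,H] for k ∈ [K], set α = √(2·log|A| / (H²·K)), and define recursively p^{k+1}(a) = p^k(a)·exp(α·Q^k(a)) / Σ_{a'} p^k(a')·exp(α·Q^k(a')). Then for any p* ∈ Δ(A), Σ_{k=1}^{K} Σ_{a∈A} Q^k(a)·(p*(a) − p^k(a)) ≤ √(2·H²·K·log|A|). -/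
/-!
Exponential weights telescope: `log p^{K+1}(a) = log p¹(a) + ∑ₖ (α Qᵏ(a) - log Zₖ)` with `Zₖ` the
k-th normalizer, and the left side is `≤ 0`. Hoeffding's lemma bounds `log Zₖ` by
`α ⟨pᵏ, Qᵏ⟩ + α²H²/8`, so for every action `α ∑ₖ (Qᵏ(a) - ⟨pᵏ, Qᵏ⟩) ≤ log |A| + Kα²H²/8`;
averaging over `p*` and inserting the tuned `α` gives the bound, with room to spare.
-/

open Finset Real MeasureTheory ProbabilityTheory

section ExpWeights

variable {A : Type*} [Fintype A]

theorem sum_mul_exp_le_of_mem_Icc {w q : A → ℝ}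
    (hw : w ∈ stdSimplex ℝ A) {a b : ℝ} (hq : ∀ x, q x ∈ Set.Icc a b) (t : ℝ) :
    ∑ x, w x * exp (t * q x) ≤ exp (t * ∑ x, w x * q x + (b - a) ^ 2 * t ^ 2 / 8) := by
  -- view `w` as a PMF on the discrete space `A` so that Hoeffding's lemma applies
  let _ : MeasurableSpace A := ⊤
  have : DiscreteMeasurableSpace A := ⟨fun _ => trivial⟩
  let P : PMF A := PMF.ofFintype (fun x => ENNReal.ofReal (w x)) (by
    rw [← ENNReal.ofReal_sum_of_nonneg (fun x _ => hw.1 x), hw.2, ENNReal.ofReal_one])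
  have hint (f : A → ℝ) : ∫ x, f x ∂P.toMeasure = ∑ x, w x * f x := by
    simp [PMF.integral_eq_sum, P, ENNReal.toReal_ofReal (hw.1 _)]
  have hoeffding := (hasSubgaussianMGF_of_mem_Icc (μ := P.toMeasure)
    (measurable_of_countable q).aemeasurable (.of_forall hq)).mgf_le t
  simp only [mgf, hint] at hoeffding
  set m := ∑ x, w x * q x
  have hc : (((‖b - a‖₊ / 2) ^ 2 : NNReal) : ℝ) = (b - a) ^ 2 / 4 := by
    simp [div_pow, sq_abs]; ring
  calc ∑ x, w x * exp (t * q x) = exp (t * m) * ∑ x, w x * exp (t * (q x - m)) := by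
        rw [mul_sum]
        refine sum_congr rfl fun x _ => ?_
        rw [mul_left_comm, ← exp_add]
        ring_nf
    _ ≤ exp (t * m) * exp ((b - a) ^ 2 / 4 * t ^ 2 / 2) := by
        rw [← hc]; gcongr
    _ = _ := by rw [← exp_add]; ring_nf

theorem sum_mul_sub_eq_sum_mul_sub_sum {v w q : A → ℝ}
    (hv : ∑ a, v a = 1) :
    ∑ a, q a * (v a - w a) = ∑ a, v a * (q a - ∑ b, w b * q b) := by
  simp only [mul_sub, sum_sub_distrib, ← sum_mul, hv, one_mul]
  congr 1 <;> exact sum_congr rfl fun a _ => by ring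

theorem sum_mul_exp_pos_s4 [Nonempty A] {w c : A → ℝ} (hw : ∀ a, 0 < w a) :
    0 < ∑ a, w a * exp (c a) :=
  sum_pos (fun a _ => mul_pos (hw a) (exp_pos _)) univ_nonempty

def IsExpWeights (α : ℝ) (Q : ℕ → A → ℝ) (K : ℕ) (p : ℕ → A → ℝ) : Prop :=
  ∀ k ∈ Icc 1 K, ∀ a, p (k + 1) a = p k a * exp (α * Q k a) / ∑ a', p k a' * exp (α * Q k a')

variable {α : ℝ} {p Q : ℕ → A → ℝ} {K : ℕ}

theorem IsExpWeights.pos [Nonempty A] (hrec : IsExpWeights α Q K p) (hp1 : ∀ a, 0 < p 1 a) :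
    ∀ k ∈ Icc 1 (K + 1), ∀ a, 0 < p k a := by
  intro k hk
  induction k with
  | zero => simp at hk
  | succ k ih =>
    rcases Nat.eq_zero_or_pos k with rfl | hk0
    · exact hp1
    have hpk := ih (by grind)
    intro a
    rw [hrec k (by grind) a]
    exact div_pos (mul_pos (hpk a) (exp_pos _)) (sum_mul_exp_pos_s4 hpk)

theorem IsExpWeights.mem_stdSimplex [Nonempty A] (hrec : IsExpWeights α Q K p)
    (hp1 : p 1 ∈ stdSimplex ℝ A) (hpos : ∀ k ∈ Icc 1 (K + 1), ∀ a, 0 < p k a) :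
    ∀ k ∈ Icc 1 (K + 1), p k ∈ stdSimplex ℝ A := by
  intro k hk
  refine ⟨fun a => (hpos k hk a).le, ?_⟩
  obtain rfl | ⟨j, rfl, hj⟩ : k = 1 ∨ ∃ j, k = j + 1 ∧ j ∈ Icc 1 K := by
    rcases k with _ | _ | j <;> grind
  · exact hp1.2
  · simp only [hrec j hj, ← sum_div]
    exact div_self (sum_mul_exp_pos_s4 (hpos j (by grind))).ne'

theorem IsExpWeights.log_eq (hrec : IsExpWeights α Q K p)
    (hpos : ∀ k ∈ Icc 1 K, ∀ a, 0 < p k a) (a : A) {n : ℕ} (hn : n ≤ K) :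
    log (p (n + 1) a) =
      log (p 1 a) + ∑ j ∈ Icc 1 n, (α * Q j a - log (∑ b, p j b * exp (α * Q j b))) := by
  induction n with
  | zero => simp
  | succ n ih =>
    have hpn := hpos (n + 1) (by grind)
    have : Nonempty A := ⟨a⟩
    rw [hrec (n + 1) (by grind) a,
      log_div (mul_pos (hpn a) (exp_pos _)).ne' (sum_mul_exp_pos_s4 hpn).ne',
      log_mul (hpn a).ne' (exp_pos _).ne', log_exp, ih (by omega),
      sum_Icc_succ_top (by omega)]
    ring

theorem IsExpWeights.sum_sub_le [Nonempty A] {lo hi : ℝ} (hrec : IsExpWeights α Q K p)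
    (hp1 : p 1 ∈ stdSimplex ℝ A) (hp1pos : ∀ a, 0 < p 1 a)
    (hQ : ∀ k ∈ Icc 1 K, ∀ a, Q k a ∈ Set.Icc lo hi) (a : A) :
    α * ∑ k ∈ Icc 1 K, (Q k a - ∑ b, p k b * Q k b) ≤
      -log (p 1 a) + K * ((hi - lo) ^ 2 * α ^ 2 / 8) := by
  have hpos := hrec.pos hp1pos
  have hsimplex := hrec.mem_stdSimplex hp1 hpos
  have hlast : log (p (K + 1) a) ≤ 0 := by
    have hK1 : K + 1 ∈ Icc 1 (K + 1) := by grind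
    refine log_nonpos (hpos _ hK1 a).le ?_
    rw [← (hsimplex _ hK1).2]
    exact single_le_sum (fun b _ => (hsimplex _ hK1).1 b) (mem_univ a)
  have hlog := hrec.log_eq (fun k hk => hpos k (by grind)) a le_rfl
  have hnormalizer : ∀ k ∈ Icc 1 K, log (∑ b, p k b * exp (α * Q k b)) - α * ∑ b, p k b * Q k b
      ≤ (hi - lo) ^ 2 * α ^ 2 / 8 := by
    intro k hk
    have := sum_mul_exp_le_of_mem_Icc (hsimplex k (by grind)) (hQ k hk) α
    rw [← log_le_iff_le_exp (sum_mul_exp_pos_s4 (hpos k (by grind)))] at this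
    linarith
  calc α * ∑ k ∈ Icc 1 K, (Q k a - ∑ b, p k b * Q k b)
      = ∑ k ∈ Icc 1 K, (α * Q k a - log (∑ b, p k b * exp (α * Q k b)))
        + ∑ k ∈ Icc 1 K, (log (∑ b, p k b * exp (α * Q k b)) - α * ∑ b, p k b * Q k b) := by
        rw [mul_sum, ← sum_add_distrib]
        exact sum_congr rfl fun k _ => by ring
    _ ≤ -log (p 1 a) + ∑ k ∈ Icc 1 K, (hi - lo) ^ 2 * α ^ 2 / 8 :=
        add_le_add (by linarith) (sum_le_sum hnormalizer)
    _ = -log (p 1 a) + K * ((hi - lo) ^ 2 * α ^ 2 / 8) := by simp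

theorem IsExpWeights.regret_le [Nonempty A] {lo hi : ℝ} (hrec : IsExpWeights α Q K p)
    (hp1 : p 1 ∈ stdSimplex ℝ A) (hp1pos : ∀ a, 0 < p 1 a)
    (hQ : ∀ k ∈ Icc 1 K, ∀ a, Q k a ∈ Set.Icc lo hi) {v : A → ℝ} (hv : v ∈ stdSimplex ℝ A) :
    α * ∑ k ∈ Icc 1 K, ∑ a, Q k a * (v a - p k a) ≤
      ∑ a, v a * -log (p 1 a) + K * ((hi - lo) ^ 2 * α ^ 2 / 8) := by
  calc α * ∑ k ∈ Icc 1 K, ∑ a, Q k a * (v a - p k a)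
      = ∑ a, v a * (α * ∑ k ∈ Icc 1 K, (Q k a - ∑ b, p k b * Q k b)) := by
        simp only [sum_mul_sub_eq_sum_mul_sub_sum hv.2, mul_sum]
        rw [sum_comm]
        exact sum_congr rfl fun a _ => sum_congr rfl fun k _ => by ring
    _ ≤ ∑ a, v a * (-log (p 1 a) + K * ((hi - lo) ^ 2 * α ^ 2 / 8)) :=
        sum_le_sum fun a _ => mul_le_mul_of_nonneg_left (hrec.sum_sub_le hp1 hp1pos hQ a) (hv.1 a)
    _ = ∑ a, v a * -log (p 1 a) + K * ((hi - lo) ^ 2 * α ^ 2 / 8) := by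
        simp only [mul_add, sum_add_distrib, ← sum_mul, hv.2, one_mul]

end ExpWeights

/-- Instantiated mirror-descent regret bound with uniform initialization. -/
theorem mirror_descent_regret_uniform {A : Type*} [Fintype A]
    (hA : 2 ≤ Fintype.card A)
    (H : ℝ) (hH : 0 < H) (K : ℕ) (hK : 1 ≤ K)
    (α : ℝ) (hαdef : α = Real.sqrt (2 * Real.log (Fintype.card A) / (H ^ 2 * K)))
    (p : ℕ → A → ℝ) (hp1 : ∀ a, p 1 a = ((Fintype.card A : ℝ))⁻¹)
    (Q : ℕ → A → ℝ)
    (hQ0 : ∀ k ∈ Finset.Icc 1 K, ∀ a, 0 ≤ Q k a)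
    (hQH : ∀ k ∈ Finset.Icc 1 K, ∀ a, Q k a ≤ H)
    (hrec : ∀ k ∈ Finset.Icc 1 K, ∀ a,
      p (k+1) a = p k a * Real.exp (α * Q k a) / ∑ a', p k a' * Real.exp (α * Q k a'))
    (pstar : A → ℝ) (hps0 : ∀ a, 0 ≤ pstar a) (hps1 : ∑ a, pstar a = 1) :
    ∑ k ∈ Finset.Icc 1 K, ∑ a, Q k a * (pstar a - p k a) ≤
      Real.sqrt (2 * H ^ 2 * K * Real.log (Fintype.card A)) := by
  have : Nonempty A := Fintype.card_pos_iff.mp (by omega)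
  set L := log (Fintype.card A)
  have hL : 0 < L := log_pos (by exact_mod_cast hA)
  have hK' : (0 : ℝ) < K := by exact_mod_cast hK
  have hα : 0 < α := hαdef ▸ sqrt_pos.2 (by positivity)
  have hα2 : α ^ 2 = 2 * L / (H ^ 2 * K) := hαdef ▸ sq_sqrt (by positivity)
  have hp1pos : ∀ a, 0 < p 1 a := fun a => by rw [hp1]; positivity
  have hregret := IsExpWeights.regret_le hrec ⟨fun a => (hp1pos a).le, by simp [hp1]⟩ hp1pos
    (fun k hk a => ⟨hQ0 k hk a, hQH k hk a⟩) ⟨hps0, hps1⟩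
  simp only [hp1, log_inv, neg_neg, ← sum_mul, hps1, one_mul, sub_zero] at hregret
  have hvariance : (K : ℝ) * (H ^ 2 * α ^ 2 / 8) = L / 4 := by rw [hα2]; field_simp; ring
  have hsqrt : α * √(2 * H ^ 2 * K * L) = 2 * L := by
    rw [hαdef, ← sqrt_mul (by positivity),
      show 2 * L / (H ^ 2 * K) * (2 * H ^ 2 * K * L) = (2 * L) ^ 2 by field_simp]
    exact sqrt_sq (by positivity)
  exact le_of_mul_le_mul_left (by linarith) hα
end

section
/- Elliptical potential lemma, first part: Let Λ₀ be a d × d real symmetric positive-definite matrix, let φ_1, φ_2, … be vectors in ℝ^d, and define Λ_j = Λ₀ + Σ_{i=1}^{j−1} φ_i φ_iᵀ for j ≥ 1 (so Λ_1 = Λ₀). Then for every t ≥ 1, Σ_{j=1}^{t} min{ 1, φ_jᵀ Λ_j^{−1} φ_j } ≤ 2 · log( det(Λ_{t+1}) / det(Λ_1) ). -/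
open Matrix Finset

/-!
By the matrix determinant lemma, `det Λ_{j+1} = det Λ_j · (1 + q_j)` with
`q_j = φ_jᵀ Λ_j⁻¹ φ_j ≥ 0`, and `min 1 q ≤ 2 log (1 + q)` for `q ≥ 0` (from
`2q / (q + 2) ≤ log (1 + q)`). Summing over `j`, the right-hand sides telescope.
-/

theorem Matrix.det_add_vecMulVec {m R : Type*} [Fintype m] [DecidableEq m] [CommRing R]
    {A : Matrix m m R} (hA : IsUnit A.det) (u v : m → R) :
    (A + vecMulVec u v).det = A.det * (1 + v ⬝ᵥ (A⁻¹ *ᵥ u)) := by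
  have hfactor : A + vecMulVec u v = A * (1 + vecMulVec (A⁻¹ *ᵥ u) v) := by
    rw [Matrix.mul_add, Matrix.mul_one, mul_vecMulVec, mulVec_mulVec, mul_nonsing_inv A hA,
      one_mulVec]
  rw [hfactor, det_mul, vecMulVec_eq Unit, det_one_add_replicateCol_mul_replicateRow]

theorem Real.min_one_le_two_mul_log_one_add {x : ℝ} (hx : 0 ≤ x) :
    min 1 x ≤ 2 * Real.log (1 + x) :=
  calc min 1 x ≤ 2 * (2 * x / (x + 2)) := by
        rw [← mul_div_assoc, le_div_iff₀ (by positivity)]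
        rcases le_total x 1 with h | h
        · rw [min_eq_right h]; nlinarith
        · rw [min_eq_left h]; linarith
    _ ≤ 2 * Real.log (1 + x) := by gcongr; exact Real.le_log_one_add_of_nonneg hx

theorem Matrix.PosDef.min_one_le_two_mul_log_det_add_vecMulVec {m : Type*} [Fintype m]
    [DecidableEq m] {A : Matrix m m ℝ} (hA : A.PosDef) (u : m → ℝ) :
    min 1 (u ⬝ᵥ (A⁻¹ *ᵥ u)) ≤
      2 * (Real.log (A + vecMulVec u u).det - Real.log A.det) := by
  have hq : 0 ≤ u ⬝ᵥ (A⁻¹ *ᵥ u) := by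
    simpa [star_trivial] using hA.inv.posSemidef.dotProduct_mulVec_nonneg u
  rw [det_add_vecMulVec hA.det_pos.ne'.isUnit, Real.log_mul hA.det_pos.ne' (by positivity),
    add_sub_cancel_left]
  exact Real.min_one_le_two_mul_log_one_add hq

theorem Matrix.PosDef.sum_min_one_le_two_mul_log_det_div {m : Type*} [Fintype m] [DecidableEq m]
    {A : ℕ → Matrix m m ℝ} (hA : ∀ j, (A j).PosDef) {φ : ℕ → m → ℝ} {a b : ℕ} (hab : a ≤ b)
    (hstep : ∀ j ∈ Icc a b, A (j + 1) = A j + vecMulVec (φ j) (φ j)) :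
    ∑ j ∈ Icc a b, min 1 (φ j ⬝ᵥ ((A j)⁻¹ *ᵥ φ j)) ≤
      2 * Real.log ((A (b + 1)).det / (A a).det) :=
  calc ∑ j ∈ Icc a b, min 1 (φ j ⬝ᵥ ((A j)⁻¹ *ᵥ φ j))
      ≤ ∑ j ∈ Icc a b, 2 * (Real.log (A (j + 1)).det - Real.log (A j).det) :=
        sum_le_sum fun j hj => hstep j hj ▸ (hA j).min_one_le_two_mul_log_det_add_vecMulVec (φ j)
    _ = 2 * Real.log ((A (b + 1)).det / (A a).det) := by
        rw [← mul_sum, sum_Icc_sub hab (fun j => Real.log (A j).det),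
          Real.log_div (hA _).det_pos.ne' (hA _).det_pos.ne']

/-- Elliptical potential lemma, first part. -/
theorem elliptical_potential_one (d : ℕ)
    (Λ₀ : Matrix (Fin d) (Fin d) ℝ) (hΛ₀ : Λ₀.PosDef)
    (φ : ℕ → Fin d → ℝ)
    (Λ : ℕ → Matrix (Fin d) (Fin d) ℝ)
    (hΛ : ∀ j, Λ j = Λ₀ + ∑ i ∈ Finset.Icc 1 (j - 1), vecMulVec (φ i) (φ i))
    (t : ℕ) (ht : 1 ≤ t) :
    ∑ j ∈ Finset.Icc 1 t, min 1 (φ j ⬝ᵥ ((Λ j)⁻¹ *ᵥ φ j)) ≤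
      2 * Real.log ((Λ (t + 1)).det / (Λ 1).det) := by
  have hpos (j : ℕ) : (Λ j).PosDef := by
    rw [hΛ j]
    refine hΛ₀.add_posSemidef (posSemidef_sum _ fun i _ => ?_)
    simpa [star_trivial] using posSemidef_vecMulVec_self_star (φ i)
  refine PosDef.sum_min_one_le_two_mul_log_det_div hpos ht fun j hj => ?_
  obtain ⟨k, rfl⟩ : ∃ k, j = k + 1 := ⟨j - 1, by grind⟩
  rw [hΛ, hΛ, add_tsub_cancel_right, add_tsub_cancel_right, add_assoc,
    sum_Icc_succ_top (by omega)]
end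

section
/- Elliptical potential lemma, second part: Let Λ₀ be a d × d real symmetric positive-definite matrix whose smallest eigenvalue is at least 1, let φ_1, φ_2, … be vectors in ℝ^d with ‖φ_j‖₂ ≤ 1 for all j, and define Λ_j = Λ₀ + Σ_{i=1}^{j−1} φ_i φ_iᵀ for j ≥ 1 (so Λ_1 = Λ₀). Then for every t ≥ 1, log( det(Λ_{t+1}) / det(Λ_1) ) ≤ Σ_{j=1}^{t} φ_jᵀ Λ_j^{−1} φ_j ≤ 2 · log( det(Λ_{t+1}) / det(Λ_1) ). -/
/-!
By the matrix determinant lemma, `det Λ_{j+1} = det Λ_j * (1 + s_j)` with `s_j = φ_jᵀ Λ_j⁻¹ φ_j`,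
so the log-ratio of determinants is `∑ log (1 + s_j)`. Since `Λ_j ≥ 1` and `‖φ_j‖ ≤ 1`, each
`s_j` lies in `[0, 1]`, where `log (1 + x) ≤ x ≤ 2 log (1 + x)`.
-/

open Matrix Finset

namespace Matrix

variable {n : Type*}

theorem PosSemidef.posDef_of_sub_one [DecidableEq n] {A : Matrix n n ℝ}
    (hA : (A - 1).PosSemidef) : A.PosDef := by
  simpa using PosDef.one.add_posSemidef hA

variable [Fintype n]

theorem dotProduct_sq_le (u v : n → ℝ) : (u ⬝ᵥ v) ^ 2 ≤ (u ⬝ᵥ u) * (v ⬝ᵥ v) := by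
  simpa [dotProduct, sq] using sum_mul_sq_le_sq_mul_sq univ u v

variable [DecidableEq n]

theorem det_add_vecMulVec_s13 {A : Matrix n n ℝ} (hA : IsUnit A.det) (u v : n → ℝ) :
    (A + vecMulVec u v).det = A.det * (1 + v ⬝ᵥ (A⁻¹ *ᵥ u)) := by
  rw [vecMulVec_eq Unit, det_add_replicateCol_mul_replicateRow hA, Matrix.mul_assoc,
    ← replicateCol_mulVec, det_unique (n := Unit), add_apply, one_apply_eq,
    replicateRow_mul_replicateCol_apply]

theorem det_eq_det_mul_prod_of_add_vecMulVec {A : ℕ → Matrix n n ℝ} {v : ℕ → n → ℝ}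
    (hA : ∀ j, IsUnit (A j).det) (hsucc : ∀ j, 1 ≤ j → A (j + 1) = A j + vecMulVec (v j) (v j))
    (t : ℕ) : (A (t + 1)).det = (A 1).det * ∏ j ∈ Icc 1 t, (1 + v j ⬝ᵥ ((A j)⁻¹ *ᵥ v j)) := by
  induction t with
  | zero => simp
  | succ t ih =>
    rw [hsucc (t + 1) (by omega), det_add_vecMulVec_s13 (hA _), ih,
      prod_Icc_succ_top (by omega), mul_assoc]

namespace PosSemidef

variable {A : Matrix n n ℝ}

theorem dotProduct_self_le_of_sub_one (hA : (A - 1).PosSemidef) (x : n → ℝ) :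
    x ⬝ᵥ x ≤ x ⬝ᵥ (A *ᵥ x) := by
  have := hA.dotProduct_mulVec_nonneg x
  rw [star_trivial, sub_mulVec, dotProduct_sub, one_mulVec] at this
  linarith

/-- With `ψ = A⁻¹ v` and `s = v ⬝ ψ`: `ψ ⬝ ψ ≤ ψ ⬝ A ψ = s`, and by Cauchy–Schwarz
`s² ≤ (v ⬝ v) (ψ ⬝ ψ) ≤ s`. -/
theorem dotProduct_inv_mulVec_mem_Icc_of_sub_one (hA : (A - 1).PosSemidef)
    {v : n → ℝ} (hv : v ⬝ᵥ v ≤ 1) : v ⬝ᵥ (A⁻¹ *ᵥ v) ∈ Set.Icc 0 1 := by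
  set ψ := A⁻¹ *ᵥ v
  have hAψ : A *ᵥ ψ = v := by
    rw [mulVec_mulVec, mul_nonsing_inv A hA.posDef_of_sub_one.det_pos.ne'.isUnit, one_mulVec]
  have hψ : ψ ⬝ᵥ ψ ≤ v ⬝ᵥ ψ := by
    simpa only [hAψ, dotProduct_comm ψ v] using hA.dotProduct_self_le_of_sub_one ψ
  have hψ₀ : 0 ≤ ψ ⬝ᵥ ψ := by simpa using dotProduct_self_star_nonneg ψ
  have hsq : (v ⬝ᵥ ψ) ^ 2 ≤ v ⬝ᵥ ψ :=
    calc (v ⬝ᵥ ψ) ^ 2 ≤ (v ⬝ᵥ v) * (ψ ⬝ᵥ ψ) := dotProduct_sq_le v ψ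
      _ ≤ ψ ⬝ᵥ ψ := mul_le_of_le_one_left hψ₀ hv
      _ ≤ v ⬝ᵥ ψ := hψ
  constructor <;> nlinarith

end PosSemidef

end Matrix

theorem Real.le_two_mul_log_one_add {x : ℝ} (h₀ : 0 ≤ x) (h₂ : x ≤ 2) :
    x ≤ 2 * Real.log (1 + x) := by
  have := Real.le_log_one_add_of_nonneg h₀
  rw [div_le_iff₀ (by linarith)] at this
  nlinarith

theorem elliptical_potential_two_general (d : ℕ)
    (Λ₀ : Matrix (Fin d) (Fin d) ℝ)
    (hΛ₀min : (Λ₀ - (1 : Matrix (Fin d) (Fin d) ℝ)).PosSemidef)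
    (φ : ℕ → Fin d → ℝ)
    (hφ : ∀ j, Real.sqrt (∑ i, (φ j i) ^ 2) ≤ 1)
    (Λ : ℕ → Matrix (Fin d) (Fin d) ℝ)
    (hΛ : ∀ j, Λ j = Λ₀ + ∑ i ∈ Finset.Icc 1 (j - 1), vecMulVec (φ i) (φ i))
    (t : ℕ) :
    Real.log ((Λ (t + 1)).det / (Λ 1).det) ≤
        ∑ j ∈ Finset.Icc 1 t, φ j ⬝ᵥ ((Λ j)⁻¹ *ᵥ φ j) ∧
      ∑ j ∈ Finset.Icc 1 t, φ j ⬝ᵥ ((Λ j)⁻¹ *ᵥ φ j) ≤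
        2 * Real.log ((Λ (t + 1)).det / (Λ 1).det) := by
  have hpsd (j : ℕ) : (Λ j - 1).PosSemidef := by
    rw [hΛ j, add_sub_right_comm]
    exact hΛ₀min.add <| posSemidef_sum _ fun i _ => by
      simpa using posSemidef_vecMulVec_self_star (φ i)
  have hdet (j : ℕ) : (Λ j).det ≠ 0 := (hpsd j).posDef_of_sub_one.det_pos.ne'
  have hsucc (j : ℕ) (hj : 1 ≤ j) : Λ (j + 1) = Λ j + vecMulVec (φ j) (φ j) := by
    obtain ⟨k, rfl⟩ := Nat.exists_eq_add_of_le' hj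
    rw [hΛ, hΛ, Nat.add_sub_cancel, Nat.add_sub_cancel, sum_Icc_succ_top (by omega), add_assoc]
  set s := fun j => φ j ⬝ᵥ ((Λ j)⁻¹ *ᵥ φ j)
  have hs (j : ℕ) : s j ∈ Set.Icc 0 1 :=
    (hpsd j).dotProduct_inv_mulVec_mem_Icc_of_sub_one (by simpa [dotProduct, sq] using hφ j)
  have hlog : Real.log ((Λ (t + 1)).det / (Λ 1).det) = ∑ j ∈ Icc 1 t, Real.log (1 + s j) := by
    rw [det_eq_det_mul_prod_of_add_vecMulVec (fun j => (hdet j).isUnit) hsucc,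
      mul_div_cancel_left₀ _ (hdet 1), Real.log_prod]
    exact fun j _ => by linarith [(hs j).1]
  rw [hlog, mul_sum]
  refine ⟨sum_le_sum fun j _ => ?_, sum_le_sum fun j _ => ?_⟩
  · linarith [Real.log_le_sub_one_of_pos (by linarith [(hs j).1] : 0 < 1 + s j)]
  · exact Real.le_two_mul_log_one_add (hs j).1 (by linarith [(hs j).2])

/-- Elliptical potential lemma, second part. -/
theorem elliptical_potential_two (d : ℕ)
    (Λ₀ : Matrix (Fin d) (Fin d) ℝ) (hΛ₀ : Λ₀.PosDef)
    (hΛ₀min : (Λ₀ - (1 : Matrix (Fin d) (Fin d) ℝ)).PosSemidef)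
    (φ : ℕ → Fin d → ℝ)
    (hφ : ∀ j, Real.sqrt (∑ i, (φ j i) ^ 2) ≤ 1)
    (Λ : ℕ → Matrix (Fin d) (Fin d) ℝ)
    (hΛ : ∀ j, Λ j = Λ₀ + ∑ i ∈ Finset.Icc 1 (j - 1), vecMulVec (φ i) (φ i))
    (t : ℕ) (ht : 1 ≤ t) :
    Real.log ((Λ (t + 1)).det / (Λ 1).det) ≤
        ∑ j ∈ Finset.Icc 1 t, φ j ⬝ᵥ ((Λ j)⁻¹ *ᵥ φ j) ∧
      ∑ j ∈ Finset.Icc 1 t, φ j ⬝ᵥ ((Λ j)⁻¹ *ᵥ φ j) ≤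
        2 * Real.log ((Λ (t + 1)).det / (Λ 1).det) :=
  elliptical_potential_two_general d Λ₀ hΛ₀min φ hφ Λ hΛ t
end
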